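/- arXiv:math/0302025 — 4 statements merged into one kernel-verified Lean document; each statement's English description precedes it below -/
import Mathlib

section
/- Let R be a DVR with uniformizer π and residue field k of characteristic ≠ 2, and n ≥ 3, k fixed in {1,...,n}. Then the ring A = R[x₁,...,xₙ,y]/(y·(∑xᵢ²) − 2π, xₖ − 1) is flat over R. -/
/-!
Substituting `x_c = 1` identifies `A` with `R[x_i (i ≠ c), y] / (f₁)`, where
`f₁ = y · (1 + ∑_{i ≠ c} x_i²) - 2π`. Since `π` is prime in the polynomial ring and does not
divide `f₁` (at `x = 0, y = 1` it takes the value `1 - 2π`), `π` is a non-zerodivisor modulo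
`f₁`. Over a DVR every nonzero scalar is a unit times a power of `π`, so `A` is torsion-free,
hence flat.
-/

open MvPolynomial

theorem Prime.dvd_of_dvd_mul_of_not_dvd {S : Type*} [CommRing S] [IsDomain S] {p f q : S}
    (hp : Prime p) (hpf : ¬ p ∣ f) (h : f ∣ p * q) : f ∣ q := by
  obtain ⟨a, ha⟩ := h
  obtain ⟨b, rfl⟩ := (hp.dvd_or_dvd ⟨q, ha.symm⟩).resolve_left hpf
  exact ⟨b, mul_left_cancel₀ hp.ne_zero (by rw [ha]; ring)⟩

theorem IsDiscreteValuationRing.isTorsionFree_of_isSMulRegular {R M : Type*} [CommRing R]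
    [IsDomain R] [IsDiscreteValuationRing R] [AddCommGroup M] [Module R M] {π : R}
    (hπ : Irreducible π) (h : IsSMulRegular M π) : Module.IsTorsionFree R M := by
  refine .of_smul_eq_zero fun r m hrm => or_iff_not_imp_left.mpr fun hr => ?_
  obtain ⟨k, u, rfl⟩ := eq_unit_mul_pow_irreducible hr hπ
  exact ((Units.isSMulRegular M u).mul (h.pow k)).right_eq_zero_of_smul hrm

theorem Ideal.mem_span_pair_iff_of_retraction {S : Type*} [CommRing S] (φ : S →+* S) {f g : S}
    (hg : φ g = 0) (hφ : ∀ q, q - φ q ∈ Ideal.span {g}) (q : S) :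
    q ∈ Ideal.span {f, g} ↔ φ q ∈ Ideal.span {φ f} := by
  have hgJ : Ideal.span {g} ≤ Ideal.span {f, g} := Ideal.span_mono (by simp)
  constructor
  · rw [Ideal.mem_span_pair]
    rintro ⟨a, b, rfl⟩
    exact Ideal.mem_span_singleton'.mpr ⟨φ a, by simp [hg]⟩
  · rw [Ideal.mem_span_singleton']
    rintro ⟨a, ha⟩
    have hq : q = (q - φ q) - a * (f - φ f) + a * f := by rw [← ha]; ring
    rw [hq]
    exact add_mem (sub_mem (hgJ (hφ q)) (Ideal.mul_mem_left _ _ (hgJ (hφ f))))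
      (Ideal.mul_mem_left _ _ (Ideal.subset_span (by simp)))

theorem MvPolynomial.sub_aeval_update_X_mem_span {σ R : Type*} [CommRing R] [DecidableEq σ]
    (i : σ) (a : R) (q : MvPolynomial σ R) :
    q - aeval (Function.update X i (C a)) q ∈ Ideal.span {X i - C a} := by
  set J := Ideal.span {X i - C a}
  have hcomp : (Ideal.Quotient.mkₐ R J).comp (aeval (Function.update X i (C a))) =
      Ideal.Quotient.mkₐ R J := by
    refine algHom_ext fun j => ?_
    rcases eq_or_ne j i with rfl | hj
    · simp only [AlgHom.comp_apply, aeval_X, Function.update_self, Ideal.Quotient.mkₐ_eq_mk,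
        Ideal.Quotient.eq]
      exact Ideal.mem_span_singleton.mpr ⟨-1, by ring⟩
    · simp [hj]
  exact Ideal.Quotient.eq.mp (DFunLike.congr_fun hcomp q).symm

theorem stmt_9_general {R : Type*} [CommRing R] [IsDomain R] [IsDiscreteValuationRing R]
    (π : R) (hπ : Irreducible π)
    (n : ℕ) (c : Fin n)
    (I : Ideal (MvPolynomial (Fin n ⊕ Unit) R))
    (hI : I = Ideal.span
      {X (Sum.inr ()) * (∑ i : Fin n, (X (Sum.inl i)) ^ 2) - C (2 * π),
       X (Sum.inl c) - 1}) :
    Module.Flat R (MvPolynomial (Fin n ⊕ Unit) R ⧸ I) := by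
  classical
  set f : MvPolynomial (Fin n ⊕ Unit) R :=
    X (Sum.inr ()) * (∑ i : Fin n, (X (Sum.inl i)) ^ 2) - C (2 * π)
  set φ : MvPolynomial (Fin n ⊕ Unit) R →ₐ[R] MvPolynomial (Fin n ⊕ Unit) R :=
    aeval (Function.update X (Sum.inl c) (C 1))
  have hmem : ∀ q, q ∈ I ↔ φ q ∈ Ideal.span {φ f} := by
    rw [hI, ← C_1]
    exact Ideal.mem_span_pair_iff_of_retraction φ.toRingHom (by simp [φ])
      (sub_aeval_update_X_mem_span _ _)
  have hπf : ¬ C π ∣ φ f := fun h => by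
    have h₀ : π ∣ 1 - 2 * π := by
      simpa [φ, f, Function.update_apply, apply_ite (eval _)] using
        map_dvd (eval (Sum.elim 0 1)) h
    exact hπ.not_isUnit (isUnit_of_dvd_one ((dvd_sub_left (dvd_mul_left π 2)).mp h₀))
  have hCπ : Prime (C π : MvPolynomial (Fin n ⊕ Unit) R) := (prime_C_iff _).mpr hπ.prime
  have hreg : IsSMulRegular (MvPolynomial (Fin n ⊕ Unit) R ⧸ I) π := by
    refine (isSMulRegular_quotient_iff_mem_of_smul_mem (I.restrictScalars R) π).mpr fun q hq => ?_
    rw [Submodule.restrictScalars_mem, Algebra.smul_def, hmem, map_mul, AlgHom.commutes,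
      algebraMap_eq] at hq
    rw [Submodule.restrictScalars_mem, hmem]
    exact Ideal.mem_span_singleton.mpr
      (hCπ.dvd_of_dvd_mul_of_not_dvd hπf (Ideal.mem_span_singleton.mp hq))
  have := IsDiscreteValuationRing.isTorsionFree_of_isSMulRegular hπ hreg
  infer_instance

/-- Let `R` be a DVR with uniformizer `π` and residue field of characteristic
`≠ 2`, and `n ≥ 3`.  Then `A = R[x₁,…,xₙ,y]/(y·(∑xᵢ²) − 2π, x_c − 1)` is flat
over `R`. -/
theorem stmt_9 {R : Type*} [CommRing R] [IsDomain R] [IsDiscreteValuationRing R]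
    (π : R) (hπ : Irreducible π)
    (hchar : ringChar (IsLocalRing.ResidueField R) ≠ 2)
    (n : ℕ) (hn : 3 ≤ n) (c : Fin n)
    (I : Ideal (MvPolynomial (Fin n ⊕ Unit) R))
    (hI : I = Ideal.span
      {X (Sum.inr ()) * (∑ i : Fin n, (X (Sum.inl i)) ^ 2) - C (2 * π),
       X (Sum.inl c) - 1}) :
    Module.Flat R (MvPolynomial (Fin n ⊕ Unit) R ⧸ I) :=
  stmt_9_general π hπ n c I hI
end

section
/- Let M be a finite module over a commutative ring B and N ⊆ M a direct summand. If N ⊆ M are both direct summands of a finite free B-module of the same constant rank, then N = M. (Inclusion of direct summands of equal rank is an equality.) -/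
/-!
The inclusion `N ↪ M` has a retraction, coming from the projection of `B^n` onto `N`, so it stays
injective on every fiber `κ(p) ⊗ -`; as both fibers have dimension `r`, it is bijective there.
Its cokernel is then a finite module with zero fibers, hence zero by Nakayama's lemma.
-/

open TensorProduct Module

namespace LinearMap

variable {R M N : Type*} [CommRing R] [AddCommGroup M] [Module R M] [AddCommGroup N] [Module R N]

theorem surjective_of_surjective_baseChange_residueField [Module.Finite R N] (f : M →ₗ[R] N)
    (hf : ∀ (p : Ideal R) [p.IsPrime], Function.Surjective (f.baseChange p.ResidueField)) :
    Function.Surjective f := by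
  have hfiber (p : PrimeSpectrum R) :
      Subsingleton (p.asIdeal.ResidueField ⊗[R] (N ⧸ range f)) := by
    refine subsingleton_iff_forall_eq 0 |>.mpr fun x ↦ ?_
    obtain ⟨y, rfl⟩ := lTensor_surjective _ (range f).mkQ_surjective x
    obtain ⟨z, rfl⟩ := hf p.asIdeal y
    rw [baseChange_eq_ltensor, ← comp_apply, ← lTensor_comp, range_mkQ_comp, lTensor_zero,
      zero_apply]
  have hsupport : support R (N ⧸ range f) = ∅ :=
    Set.eq_empty_iff_forall_notMem.mpr fun p hp ↦ not_nontrivial_iff_subsingleton.mpr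
      (hfiber p) ((mem_support_iff_nontrivial_residueField_tensorProduct p).mp hp)
  have : Subsingleton (N ⧸ range f) := support_eq_empty_iff.mp hsupport
  exact range_eq_top.mp (Submodule.Quotient.subsingleton_iff.mp this)

theorem surjective_of_leftInverse_of_finrank_residueField_eq [Module.Finite R N]
    {f : M →ₗ[R] N} {g : N →ₗ[R] M} (hgf : g ∘ₗ f = id)
    (hrank : ∀ (p : Ideal R) [p.IsPrime],
      finrank p.ResidueField (p.ResidueField ⊗[R] M) =
        finrank p.ResidueField (p.ResidueField ⊗[R] N)) :
    Function.Surjective f := by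
  have : Module.Finite R M := .of_surjective g fun x ↦ ⟨f x, LinearMap.congr_fun hgf x⟩
  refine surjective_of_surjective_baseChange_residueField f fun p _ ↦ ?_
  have hgf' : g.baseChange p.ResidueField ∘ₗ f.baseChange p.ResidueField = id := by
    rw [← baseChange_comp, hgf, baseChange_id]
  have hinj : Function.Injective (f.baseChange p.ResidueField) :=
    Function.LeftInverse.injective (LinearMap.congr_fun hgf')
  exact (injective_iff_surjective_of_finrank_eq_finrank (hrank p)).mp hinj

end LinearMap

/-- Let `N ⊆ M` be submodules of `B^n` which are both direct summands, locally
free of the same constant rank `r` (i.e. all fibers at primes of `B` have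
dimension `r`).  Then `N = M`. -/
theorem stmt_15 {B : Type*} [CommRing B] (n r : ℕ)
    (N M : Submodule B (Fin n → B)) (hNM : N ≤ M)
    (hN : ∃ N', IsCompl N N') (hM : ∃ M', IsCompl M M')
    (hrN : ∀ (p : Ideal B) (_ : p.IsPrime),
      finrank (IsLocalRing.ResidueField (Localization.AtPrime p))
        (IsLocalRing.ResidueField (Localization.AtPrime p) ⊗[B] N) = r)
    (hrM : ∀ (p : Ideal B) (_ : p.IsPrime),
      finrank (IsLocalRing.ResidueField (Localization.AtPrime p))
        (IsLocalRing.ResidueField (Localization.AtPrime p) ⊗[B] M) = r) :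
    N = M := by
  obtain ⟨N', hN'⟩ := hN
  obtain ⟨M', hM'⟩ := hM
  have : Module.Finite B M := .of_surjective _ (Submodule.projectionOnto_surjective hM')
  have hretract :
      (N.projectionOnto N' hN' ∘ₗ M.subtype) ∘ₗ Submodule.inclusion hNM = LinearMap.id :=
    LinearMap.ext (Submodule.projectionOnto_apply_left hN')
  have hsurj : Function.Surjective (Submodule.inclusion hNM) :=
    LinearMap.surjective_of_leftInverse_of_finrank_residueField_eq hretract
      fun p hp ↦ (hrN p hp).trans (hrM p hp).symm
  rw [← LinearMap.range_eq_top, Submodule.range_inclusion, Submodule.comap_subtype_eq_top] at hsurj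
  exact le_antisymm hNM hsurj
end

section
/- Let R be a commutative ring, π ∈ R, λ, γ ∈ R^n column vectors with λₖ = 1 for some k, and A = λγᵗ − π·Id. Then the system of conditions (i) A = Aᵗ, (ii) Aλ = πλ is equivalent to: γᵢ = γₖλᵢ for all i, and (∑ᵢ λᵢ²)·γₖ = 2π. -/
open Matrix

/-- Let `R` be a commutative ring, `π ∈ R`, `λ, γ ∈ R^n` with `λ k = 1`, and
`A = λ γᵗ − π·Id`. Then the conditions `A = Aᵀ` and `A λ = π λ` together are
equivalent to: `γ i = γ k * λ i` for all `i`, and `(∑ i, λ i ^ 2) * γ k = 2 π`. -/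
theorem stmt_17 {R : Type*} [CommRing R] {n : ℕ} (π : R) (lam gam : Fin n → R)
    (k : Fin n) (hk : lam k = 1)
    (A : Matrix (Fin n) (Fin n) R) (hA : A = Matrix.vecMulVec lam gam - π • (1 : Matrix (Fin n) (Fin n) R)) :
    (A = Aᵀ ∧ A *ᵥ lam = π • lam) ↔
      ((∀ i, gam i = gam k * lam i) ∧ (∑ i, lam i ^ 2) * gam k = 2 * π) := by
  have hent : ∀ i j, A i j = lam i * gam j - π * (if i = j then 1 else 0) := by
    intro i j
    simp [hA, Matrix.vecMulVec_apply, Matrix.sub_apply, Matrix.one_apply, Matrix.smul_apply,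
      mul_ite]
  have hmv : ∀ i, (A *ᵥ lam) i = lam i * (∑ j, gam j * lam j) - π * lam i := by
    intro i
    simp only [Matrix.mulVec, dotProduct, hent, sub_mul, Finset.sum_sub_distrib,
      mul_assoc, ← Finset.mul_sum, ite_mul, one_mul, zero_mul, Finset.sum_ite_eq,
      Finset.mem_univ, if_true]
  constructor
  · rintro ⟨hs, hm⟩
    have h1 : ∀ i, gam i = gam k * lam i := by
      intro i
      have h := congrFun (congrFun hs i) k
      rw [Matrix.transpose_apply] at h
      rw [hent, hent, hk] at h
      have hiff : (if i = k then (1:R) else 0) = (if k = i then 1 else 0) := by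
        simp [eq_comm]
      rw [hiff] at h
      linear_combination -h
    refine ⟨h1, ?_⟩
    have h2 := congrFun hm k
    rw [hmv, hk, Pi.smul_apply, hk, smul_eq_mul, mul_one, one_mul] at h2
    have hsum : (∑ j, gam j * lam j) = (∑ i, lam i ^ 2) * gam k := by
      rw [Finset.sum_mul]
      refine Finset.sum_congr rfl fun j _ => ?_
      rw [h1 j]; ring
    rw [hsum] at h2
    linear_combination h2
  · rintro ⟨h1, h2⟩
    have hsum : (∑ j, gam j * lam j) = 2 * π := by
      rw [← h2, Finset.sum_mul]
      refine Finset.sum_congr rfl fun j _ => ?_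
      rw [h1 j]; ring
    constructor
    · ext i j
      rw [Matrix.transpose_apply, hent, hent, h1 i, h1 j]
      have hiff : (if i = j then (1:R) else 0) = (if j = i then 1 else 0) := by
        simp [eq_comm]
      rw [hiff]; ring
    · funext i
      rw [hmv, hsum, Pi.smul_apply, smul_eq_mul]; ring
end

section
/- Let F be a free R-module of rank n over a commutative ring R, π ∈ R, and Π an endomorphism of F represented (in a basis v₁,...,vₙ with Πv₁ = πv₁ and Πvⱼ ∈ span(v₁) − πvⱼ for j ≥ 2) by an upper-triangular matrix with diagonal (π, −π, ..., −π). Then char_{Π|F}(T) = (T+π)^{n−1}(T−π), ∧^n(Π − π·id) = 0, and ∧²(Π + π·id) = 0. -/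
/-!
The first column of the matrix is `π e₀` and every other row `j` is `-π eⱼ`. Hence the matrix is upper
triangular with diagonal `(π, -π, …, -π)`; `Π - π` kills `e₀`, so the `n`-fold wedge of its images,
evaluated on basis vectors, always contains a zero factor; and `Π + π` has image in the line `R e₀`,
so any two of its images are proportional and their wedge vanishes.
-/

open Polynomial

namespace ExteriorAlgebra

variable {R M N : Type*} [CommRing R] [AddCommGroup M] [Module R M] [AddCommGroup N] [Module R N]

theorem ι_mul_ι_eq_zero_of_mem_span_singleton {u x y : M} (hx : x ∈ R ∙ u) (hy : y ∈ R ∙ u) :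
    ι R x * ι R y = 0 := by
  obtain ⟨a, rfl⟩ := Submodule.mem_span_singleton.mp hx
  obtain ⟨b, rfl⟩ := Submodule.mem_span_singleton.mp hy
  rw [map_smul, map_smul, smul_mul_smul_comm, ι_sq_zero, smul_zero]

theorem ιMulti_compLinearMap_eq_zero_of_apply_basis_eq_zero {n : ℕ} (b : Module.Basis (Fin n) R M)
    {f : M →ₗ[R] N} {i : Fin n} (hi : f (b i) = 0) : (ιMulti R n).compLinearMap f = 0 := by
  refine b.ext_alternating fun w hw => ?_
  obtain ⟨k, rfl⟩ := (Finite.injective_iff_surjective.mp hw) i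
  rw [AlternatingMap.compLinearMap_apply, AlternatingMap.map_coord_zero _ k (by simpa using hi),
    AlternatingMap.zero_apply]

end ExteriorAlgebra

namespace Matrix

variable {R ι : Type*} [CommRing R] [Fintype ι] [DecidableEq ι] {M : Matrix ι ι R} {π : R}

theorem toLin'_sub_smul_id_apply_single_eq_zero {i : ι} (h : M.col i = Pi.single i π) :
    (toLin' M - π • (LinearMap.id : (ι → R) →ₗ[R] ι → R)) (Pi.single i 1) = 0 := by
  rw [LinearMap.sub_apply, toLin'_apply, mulVec_single_one, h, LinearMap.smul_apply,
    LinearMap.id_apply, ← Pi.single_smul', smul_eq_mul, mul_one, sub_self]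

theorem toLin'_add_smul_id_apply_mem_span_single {i : ι} (h : ∀ j ≠ i, M j = Pi.single j (-π))
    (x : ι → R) :
    (toLin' M + π • (LinearMap.id : (ι → R) →ₗ[R] ι → R)) x ∈ R ∙ Pi.single i 1 := by
  refine Submodule.mem_span_singleton.mpr ⟨(M *ᵥ x + π • x) i, funext fun j => ?_⟩
  rcases eq_or_ne j i with rfl | hj
  · simp
  · simp [hj, mulVec, h j hj]

theorem charpoly_eq_of_row_eq_single {n : ℕ} [NeZero n] {M : Matrix (Fin n) (Fin n) R}
    (h₀ : M 0 0 = π) (hrow : ∀ j ≠ 0, M j = Pi.single j (-π)) :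
    M.charpoly = (X + C π) ^ (n - 1) * (X - C π) := by
  obtain ⟨m, rfl⟩ : ∃ m, n = m + 1 := ⟨n - 1, (Nat.sub_one_add_one (NeZero.ne n)).symm⟩
  have htri : M.IsUpperTriangular := fun i j (hij : j < i) => by
    rw [hrow i (hij.trans_le' (Fin.zero_le j)).ne', Pi.single_eq_of_ne hij.ne]
  rw [charpoly_of_isUpperTriangular M htri, Fin.prod_univ_succ, h₀]
  simp [hrow _ (Fin.succ_ne_zero _), mul_comm]

end Matrix

/-- Let `F = R^n` and let `Π` be the endomorphism whose matrix (in a basis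
`v₁,…,vₙ` with `Πv₁ = πv₁` and `Πvⱼ = λⱼv₁ − πvⱼ` for `j ≥ 2`) is upper
triangular with diagonal `(π, −π, …, −π)`.  Then
`char_{Π}(T) = (T + π)^{n−1}(T − π)`, `∧ⁿ(Π − π·id) = 0` and
`∧²(Π + π·id) = 0` (the wedge of `j` images under the map vanishes in the
exterior algebra). -/
theorem stmt_18 {R : Type*} [CommRing R] (n : ℕ) [NeZero n] (π : R)
    (lam : Fin n → R) (M : Matrix (Fin n) (Fin n) R)
    (hM : ∀ i j, M i j =
      if i = j then (if i = 0 then π else -π) else (if i = 0 then lam j else 0)) :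
    M.charpoly = (X + C π) ^ (n - 1) * (X - C π) ∧
    (∀ v : Fin n → (Fin n → R),
      (List.ofFn fun i => ExteriorAlgebra.ι R
        ((Matrix.toLin' M - π • (LinearMap.id : (Fin n → R) →ₗ[R] (Fin n → R))) (v i))).prod = 0) ∧
    (∀ v : Fin 2 → (Fin n → R),
      (List.ofFn fun i => ExteriorAlgebra.ι R
        ((Matrix.toLin' M + π • (LinearMap.id : (Fin n → R) →ₗ[R] (Fin n → R))) (v i))).prod = 0) := by
  have hcol : M.col 0 = Pi.single 0 π := funext fun j => by
    rcases eq_or_ne j 0 with rfl | hj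
    · simp [hM]
    · simp [hM, hj]
  have hrow : ∀ j ≠ 0, M j = Pi.single j (-π) := fun j hj => funext fun k => by
    rcases eq_or_ne k j with rfl | hk
    · simp [hM, hj]
    · simp [hM, hj, hk, Ne.symm hk]
  have hcorner : M 0 0 = π := by simpa using congrFun hcol 0
  refine ⟨Matrix.charpoly_eq_of_row_eq_single hcorner hrow, fun v => ?_, fun v => ?_⟩
  · have hzero := ExteriorAlgebra.ιMulti_compLinearMap_eq_zero_of_apply_basis_eq_zero
      (Pi.basisFun R (Fin n)) (i := 0)
      (by rw [Pi.basisFun_apply]; exact Matrix.toLin'_sub_smul_id_apply_single_eq_zero hcol)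
    simpa [ExteriorAlgebra.ιMulti_apply] using DFunLike.congr_fun hzero v
  · have hspan := Matrix.toLin'_add_smul_id_apply_mem_span_single hrow
    simpa [List.ofFn_succ] using
      ExteriorAlgebra.ι_mul_ι_eq_zero_of_mem_span_singleton (hspan (v 0)) (hspan (v 1))
end
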